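/- Let f be an antisymmetric flow assignment and ρ a circulation feasible in the residual graph G_f (i.e., ρ(d) ≤ c(d) - f(d) for all darts d). Then f + ρ is a pseudoflow in G, the inflow of f + ρ at every node equals the inflow of f at that node, and for any two nodes u, v: if there is no residual u-to-v path in G_f then there is no residual u-to-v path in G_{f+ρ}. -/

import Mathlib

/-- A directed graph given by darts: each dart has a tail, a head, and a reverse dart. -/
structure Dgraph (V D : Type) where
  tail : D → V
  head : D → V
  rev : D → D
  rev_rev : ∀ d, rev (rev d) = d
  tail_rev : ∀ d, tail (rev d) = head d
  head_rev : ∀ d, head (rev d) = tail d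

namespace Dgraph

variable {V D : Type}

/-- an antisymmetric flow assignment -/
def Antisym (G : Dgraph V D) (f : D → ℝ) : Prop :=
  ∀ d, f (G.rev d) = - f d

/-- net inflow of a flow assignment at a node -/
noncomputable def inflow [Fintype D] [DecidableEq V] (G : Dgraph V D) (f : D → ℝ) (v : V) : ℝ :=
  ∑ d ∈ Finset.univ.filter (fun d => G.head d = v), f d

/-- one step along a dart of strictly positive capacity -/
def ResStep (G : Dgraph V D) (cap : D → ℝ) (u v : V) : Prop :=
  ∃ d, G.tail d = u ∧ G.head d = v ∧ 0 < cap d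

/-- existence of a path all of whose darts have strictly positive capacity -/
def ResReach (G : Dgraph V D) (cap : D → ℝ) (u v : V) : Prop :=
  Relation.ReflTransGen (G.ResStep cap) u v

/-- a pseudoflow: antisymmetric and respecting all capacities -/
def Pseudoflow (G : Dgraph V D) (c f : D → ℝ) : Prop :=
  G.Antisym f ∧ ∀ d, f d ≤ c d

end Dgraph

namespace Dgraph

variable {V D : Type} {G : Dgraph V D}

theorem Antisym.add {f g : D → ℝ} (hf : G.Antisym f) (hg : G.Antisym g) :
    G.Antisym (fun d => f d + g d) := fun d => by
  simp only [hf d, hg d, neg_add]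

theorem Antisym.sum_eq_zero {ρ : D → ℝ} (hρ : G.Antisym ρ) {B : Finset D}
    (hB : ∀ d, G.rev d ∈ B ↔ d ∈ B) : ∑ d ∈ B, ρ d = 0 := by
  have hsum_rev : ∑ d ∈ B, ρ d = ∑ d ∈ B, ρ (G.rev d) :=
    Finset.sum_nbij' G.rev G.rev (fun d hd => (hB d).2 hd) (fun d hd => (hB d).2 hd)
      (fun d _ => G.rev_rev d) (fun d _ => G.rev_rev d) (fun d _ => by rw [G.rev_rev])
  rw [Finset.sum_congr rfl fun d _ => hρ d, Finset.sum_neg_distrib] at hsum_rev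
  linarith

theorem inflow_add [Fintype D] [DecidableEq V] (f g : D → ℝ) (v : V) :
    G.inflow (fun d => f d + g d) v = G.inflow f v + G.inflow g v :=
  Finset.sum_add_distrib

theorem sum_filter_head_eq_zero [Fintype D] [DecidableEq V] {ρ : D → ℝ}
    (hcirc : ∀ v, G.inflow ρ v = 0) (P : V → Prop) [DecidablePred P] :
    ∑ d with P (G.head d), ρ d = 0 := by
  rw [← Finset.sum_fiberwise_of_maps_to (fun d hd => Finset.mem_image_of_mem G.head hd)]
  refine Finset.sum_eq_zero fun v hv => ?_
  obtain ⟨d, hd, rfl⟩ := Finset.mem_image.mp hv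
  rw [Finset.filter_filter, ← hcirc (G.head d)]
  refine Finset.sum_congr (Finset.filter_congr fun e _ => ?_) fun _ _ => rfl
  exact ⟨And.right, fun he => ⟨he ▸ (Finset.mem_filter.mp hd).2, he⟩⟩

/-- The flow into the complement of `S` is the sum of its inflows, and the flow inside the
complement cancels in pairs. -/
theorem sum_cut_eq_zero [Fintype D] [DecidableEq V] {ρ : D → ℝ} (hρ : G.Antisym ρ)
    (hcirc : ∀ v, G.inflow ρ v = 0) (S : V → Prop) [DecidablePred S] :
    ∑ d with S (G.tail d) ∧ ¬ S (G.head d), ρ d = 0 := by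
  have hinside : ∑ d with ¬ S (G.tail d) ∧ ¬ S (G.head d), ρ d = 0 :=
    hρ.sum_eq_zero fun d => by simp only [Finset.mem_filter, Finset.mem_univ, true_and,
      G.tail_rev, G.head_rev, and_comm]
  have hinto := sum_filter_head_eq_zero hcirc (fun v => ¬ S v)
  rw [← Finset.sum_filter_add_sum_filter_not _ (fun d => S (G.tail d)),
    Finset.filter_filter, Finset.filter_filter] at hinto
  simp only [and_comm] at hinto
  linarith

theorem cut_eq_zero_of_nonpos [Fintype D] [DecidableEq V] {ρ : D → ℝ} (hρ : G.Antisym ρ)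
    (hcirc : ∀ v, G.inflow ρ v = 0) (S : V → Prop)
    (hnonpos : ∀ d, S (G.tail d) → ¬ S (G.head d) → ρ d ≤ 0)
    {d : D} (hd_tail : S (G.tail d)) (hd_head : ¬ S (G.head d)) : ρ d = 0 := by
  classical
  refine (Finset.sum_eq_zero_iff_of_nonpos ?_).mp (sum_cut_eq_zero hρ hcirc S) d ?_
  · simpa using hnonpos
  · simpa using ⟨hd_tail, hd_head⟩

theorem ResReach.of_closed {cap : D → ℝ} {S : V → Prop} {u v : V}
    (hclosed : ∀ d, S (G.tail d) → 0 < cap d → S (G.head d)) (hu : S u)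
    (huv : G.ResReach cap u v) : S v := by
  induction huv with
  | refl => exact hu
  | tail _ hstep ih =>
    obtain ⟨d, rfl, rfl, hd⟩ := hstep
    exact hclosed d ih hd

/-- The darts leaving the residual reachability set of `u` in `G_f` are saturated, so `ρ`
cannot push flow along them; being a circulation it pushes none back either, and they
stay saturated in `G_{f+ρ}`. -/
theorem not_resReach_add_circulation [Fintype D] [DecidableEq V] {c f ρ : D → ℝ}
    (hρ : G.Antisym ρ) (hfeas : ∀ d, ρ d ≤ c d - f d) (hcirc : ∀ v, G.inflow ρ v = 0)
    {u v : V} (huv : ¬ G.ResReach (fun d => c d - f d) u v) :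
    ¬ G.ResReach (fun d => c d - (f d + ρ d)) u v := by
  set S : V → Prop := G.ResReach (fun d => c d - f d) u
  have hsaturated : ∀ d, S (G.tail d) → ¬ S (G.head d) → c d - f d ≤ 0 :=
    fun d hd_tail hd_head => not_lt.mp fun hpos => hd_head (hd_tail.tail ⟨d, rfl, rfl, hpos⟩)
  have hzero : ∀ d, S (G.tail d) → ¬ S (G.head d) → ρ d = 0 :=
    fun d => cut_eq_zero_of_nonpos hρ hcirc S
      (fun e he_tail he_head => (hfeas e).trans (hsaturated e he_tail he_head))
  refine fun hreach => huv (ResReach.of_closed (fun d hd_tail hpos => ?_) .refl hreach)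
  by_contra hd_head
  have hcap := hsaturated d hd_tail hd_head
  have hρd := hzero d hd_tail hd_head
  linarith

end Dgraph

/-- adding a circulation feasible in the residual graph preserves
capacities, inflows, and residual non-reachability. -/
theorem stmt18 {V D : Type} [Fintype D] [DecidableEq V]
    (G : Dgraph V D) (c f ρ : D → ℝ)
    (hf : G.Antisym f) (hρ : G.Antisym ρ)
    (hfeas : ∀ d, ρ d ≤ c d - f d)
    (hcirc : ∀ v, G.inflow ρ v = 0) :
    G.Pseudoflow c (fun d => f d + ρ d) ∧
    (∀ v, G.inflow (fun d => f d + ρ d) v = G.inflow f v) ∧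
    (∀ u v : V, ¬ G.ResReach (fun d => c d - f d) u v →
      ¬ G.ResReach (fun d => c d - (f d + ρ d)) u v) :=
  ⟨⟨hf.add hρ, fun d => by linarith [hfeas d]⟩,
    fun v => by rw [Dgraph.inflow_add, hcirc, add_zero],
    fun _ _ => Dgraph.not_resReach_add_circulation hρ hfeas hcirc⟩
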